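/- There is a universal constant C > 0 such that: for every k ∈ ℝ with 0 < |k| ≤ 1, every t ≥ 0, and all functions ψ, w : [−1,1] → ℂ with ψ twice continuously differentiable, w twice continuously differentiable, ψ(±1) = 0, w(±1) = 0, and ψ''(y) − k² ψ(y) = −w(y) on (−1,1), one has ‖ψ‖_{L²} ≤ C (1 + |k t|)^{−2} ( ‖(e_{k,t} w)''‖²_{L²} + ‖(e_{k,t} w)'‖²_{L²} + ‖w‖²_{L²} )^{1/2}, where e_{k,t}(y) = e^{i k y t} and derivatives of e_{k,t} w are taken in y. -/

import Mathlib

open Set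

/-- The squared `L²` norm of a function on the interval `(-1, 1)`. -/
noncomputable def L2sq (h : ℝ → ℂ) : ℝ :=
  ∫ y in (-1 : ℝ)..1, ‖h y‖ ^ 2

/-- The function `y ↦ e^{ikyt} w(y)`. -/
noncomputable def ew (k t : ℝ) (w : ℝ → ℂ) : ℝ → ℂ :=
  fun y => Complex.exp (Complex.I * (k : ℂ) * (y : ℂ) * (t : ℂ)) * w y

/-!
Let `χ = green ψ` solve `χ'' = -ψ`, `χ(±1) = 0`; its explicit formula gives `‖χ‖ ≤ 8‖ψ‖` and
`‖χ'‖ ≤ 4‖ψ‖`. Integrating by parts against `χ`, the equation `ψ'' - k²ψ = -w` becomes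
`⟨w, χ⟩ = k²‖χ'‖² + ‖ψ‖²`, so `‖ψ‖² ≤ |⟨w, χ⟩| ≤ 8‖w‖‖ψ‖`. For the decay in `kt`, write
`w χ̄ = e^{-ikty} φ χ̄` with `φ = e^{ikty} w`: since `φ χ̄` and its derivative vanish at `±1`,
two integrations by parts against the oscillating factor give
`(ikt)² ⟨w, χ⟩ = ∫ e^{-ikty} (φ χ̄)''`, and `(φ χ̄)'' = φ''χ̄ + 2φ'χ̄' - φψ̄` is bounded in `L¹` by
`‖(∂_y,1)²φ‖ ‖ψ‖` up to a constant. Hence `(1 + (kt)²) ‖ψ‖ ≲ ‖(∂_y,1)²φ‖`.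
-/

open MeasureTheory intervalIntegral ComplexConjugate

noncomputable def L2inner (f g : ℝ → ℂ) : ℂ :=
  ∫ y in (-1 : ℝ)..1, f y * conj (g y)

lemma L2sq_nonneg (f : ℝ → ℂ) : 0 ≤ L2sq f :=
  integral_nonneg (by norm_num) fun _ _ => by positivity

lemma L2inner_self (f : ℝ → ℂ) : L2inner f f = L2sq f := by
  simp only [L2inner, L2sq, Complex.mul_conj, Complex.normSq_eq_norm_sq]
  exact integral_ofReal

lemma integral_norm_mul_le_sqrt_L2sq {f g : ℝ → ℂ} (hf : Continuous f) (hg : Continuous g) :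
    ∫ y in (-1 : ℝ)..1, ‖f y‖ * ‖g y‖ ≤ √(L2sq f) * √(L2sq g) := by
  have hmem : ∀ h : ℝ → ℂ, Continuous h →
      MemLp (fun y => ‖h y‖) (ENNReal.ofReal 2) (volume.restrict (Ioc (-1) 1)) := by
    intro h hh
    rw [ENNReal.ofReal_ofNat, memLp_two_iff_integrable_sq_norm hh.norm.aestronglyMeasurable]
    exact (hh.norm.norm.pow 2).integrableOn_Ioc
  have := integral_mul_le_Lp_mul_Lq_of_nonneg Real.HolderConjugate.two_two
    (ae_of_all _ fun _ => norm_nonneg _) (ae_of_all _ fun _ => norm_nonneg _)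
    (hmem f hf) (hmem g hg)
  simpa only [L2sq, integral_of_le (by norm_num : (-1 : ℝ) ≤ 1), Real.sqrt_eq_rpow,
    Real.rpow_two, one_div] using this

lemma norm_L2inner_le {f g : ℝ → ℂ} (hf : Continuous f) (hg : Continuous g) :
    ‖L2inner f g‖ ≤ √(L2sq f) * √(L2sq g) :=
  (intervalIntegral.norm_integral_le_integral_norm (by norm_num)).trans <| by
    simpa only [norm_mul, Complex.norm_conj] using integral_norm_mul_le_sqrt_L2sq hf hg

lemma integral_norm_le_sqrt_two_mul {f : ℝ → ℂ} (hf : Continuous f) :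
    ∫ y in (-1 : ℝ)..1, ‖f y‖ ≤ √2 * √(L2sq f) := by
  have hone : L2sq (fun _ => 1) = 2 := by norm_num [L2sq]
  simpa [hone, mul_comm] using integral_norm_mul_le_sqrt_L2sq hf (continuous_const (y := (1 : ℂ)))

lemma sqrt_L2sq_le_of_norm_le {f : ℝ → ℂ} {a : ℝ} (hf : ∀ y ∈ Icc (-1 : ℝ) 1, ‖f y‖ ≤ a) :
    √(L2sq f) ≤ √2 * a := by
  have ha : 0 ≤ a := (norm_nonneg _).trans (hf 0 (by norm_num))
  have hsq : L2sq f ≤ a ^ 2 * 2 := by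
    refine (le_abs_self _).trans ?_
    simpa [L2sq, one_add_one_eq_two] using norm_integral_le_of_norm_le_const (a := -1) (b := 1)
      (C := a ^ 2) (f := fun y => ‖f y‖ ^ 2) fun y hy => by
        rw [uIoc_of_le (by norm_num)] at hy
        simpa using pow_le_pow_left₀ (norm_nonneg _) (hf y (Ioc_subset_Icc_self hy)) 2
  calc √(L2sq f) ≤ √(a ^ 2 * 2) := Real.sqrt_le_sqrt hsq
    _ = √2 * a := by rw [Real.sqrt_mul (sq_nonneg a), Real.sqrt_sq ha, mul_comm]

lemma L2inner_deriv_left {u u' v v' : ℝ → ℂ} (hu : ∀ y, HasDerivAt u (u' y) y)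
    (hv : ∀ y, HasDerivAt v (v' y) y) (hu' : Continuous u') (hv' : Continuous v') :
    L2inner u' v = u 1 * conj (v 1) - u (-1) * conj (v (-1)) - L2inner u v' := by
  have := integral_mul_deriv_eq_deriv_mul (a := -1) (b := 1) (fun y _ => hu y)
    (fun y _ => (hv y).star) (hu'.intervalIntegrable _ _) (hv'.star.intervalIntegrable _ _)
  simp only [L2inner, starRingEnd_apply]
  linear_combination this

section Green

variable {ψ : ℝ → ℂ}

/-- `green ψ` is the solution `χ` of `χ'' = -ψ`, `χ(±1) = 0`, and `greenDeriv ψ = χ'`. -/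
noncomputable def greenDeriv (ψ : ℝ → ℂ) (x : ℝ) : ℂ :=
  (∫ z in (-1 : ℝ)..1, (1 - (z : ℂ)) * ψ z) / 2 - ∫ z in (-1 : ℝ)..x, ψ z

noncomputable def green (ψ : ℝ → ℂ) (x : ℝ) : ℂ :=
  ∫ z in (-1 : ℝ)..x, greenDeriv ψ z

lemma hasDerivAt_greenDeriv (hψ : Continuous ψ) (x : ℝ) :
    HasDerivAt (greenDeriv ψ) (-ψ x) x :=
  (hψ.integral_hasStrictDerivAt (-1) x).hasDerivAt.const_sub _

lemma continuous_greenDeriv (hψ : Continuous ψ) : Continuous (greenDeriv ψ) :=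
  continuous_iff_continuousAt.2 fun x => (hasDerivAt_greenDeriv hψ x).continuousAt

lemma hasDerivAt_green (hψ : Continuous ψ) (x : ℝ) :
    HasDerivAt (green ψ) (greenDeriv ψ x) x :=
  ((continuous_greenDeriv hψ).integral_hasStrictDerivAt (-1) x).hasDerivAt

lemma continuous_green (hψ : Continuous ψ) : Continuous (green ψ) :=
  continuous_iff_continuousAt.2 fun x => (hasDerivAt_green hψ x).continuousAt

lemma green_neg_one : green ψ (-1) = 0 :=
  integral_same

lemma green_one (hψ : Continuous ψ) : green ψ 1 = 0 := by
  have hprim : ∫ x in (-1 : ℝ)..1, (∫ z in (-1 : ℝ)..x, ψ z) * 1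
      = ∫ x in (-1 : ℝ)..1, (1 - (x : ℂ)) * ψ x := by
    rw [integral_mul_deriv_eq_deriv_mul (v := fun x : ℝ => (x : ℂ) - 1)
      (fun x _ => (hψ.integral_hasStrictDerivAt (-1) x).hasDerivAt)
      (fun x _ => by simpa using ((hasDerivAt_id x).ofReal_comp).sub_const (1 : ℂ))
      (hψ.intervalIntegrable _ _) intervalIntegrable_const]
    simp only [integral_same, Complex.ofReal_one, sub_self, mul_zero, zero_mul, zero_sub,
      ← intervalIntegral.integral_neg]
    congr 1
    ext x
    ring
  have hprim_int : IntervalIntegrable (fun x => ∫ z in (-1 : ℝ)..x, ψ z) volume (-1) 1 :=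
    (continuous_primitive (fun a b => hψ.intervalIntegrable a b) (-1)).intervalIntegrable _ _
  simp only [mul_one] at hprim
  simp only [green, greenDeriv]
  rw [intervalIntegral.integral_sub intervalIntegrable_const hprim_int,
    hprim, intervalIntegral.integral_const, Complex.real_smul]
  push_cast
  ring

lemma norm_greenDeriv_le (hψ : Continuous ψ) {x : ℝ} (hx : x ∈ Icc (-1 : ℝ) 1) :
    ‖greenDeriv ψ x‖ ≤ 2 * ∫ z in (-1 : ℝ)..1, ‖ψ z‖ := by
  have hweight : ‖∫ z in (-1 : ℝ)..1, (1 - (z : ℂ)) * ψ z‖ ≤ ∫ z in (-1 : ℝ)..1, 2 * ‖ψ z‖ := by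
    refine norm_integral_le_of_norm_le (by norm_num) (ae_of_all _ fun z hz => ?_)
      ((continuous_const.mul hψ.norm).intervalIntegrable _ _)
    have h1z : ‖1 - (z : ℂ)‖ ≤ 2 := by
      rw [← Complex.ofReal_one, ← Complex.ofReal_sub, Complex.norm_real, Real.norm_eq_abs,
        abs_le]
      constructor <;> linarith [hz.1, hz.2]
    rw [norm_mul]
    gcongr
  have hprim : ‖∫ z in (-1 : ℝ)..x, ψ z‖ ≤ ∫ z in (-1 : ℝ)..1, ‖ψ z‖ :=
    (intervalIntegral.norm_integral_le_integral_norm hx.1).trans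
      (integral_mono_interval le_rfl hx.1 hx.2 (ae_of_all _ fun _ => norm_nonneg _)
        (hψ.norm.intervalIntegrable _ _))
  rw [intervalIntegral.integral_const_mul] at hweight
  have htri := norm_sub_le ((∫ z in (-1 : ℝ)..1, (1 - (z : ℂ)) * ψ z) / 2)
    (∫ z in (-1 : ℝ)..x, ψ z)
  rw [norm_div, Complex.norm_two] at htri
  rw [greenDeriv]
  linarith

lemma norm_green_le (hψ : Continuous ψ) {x : ℝ} (hx : x ∈ Icc (-1 : ℝ) 1) :
    ‖green ψ x‖ ≤ 4 * ∫ z in (-1 : ℝ)..1, ‖ψ z‖ := by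
  set M := ∫ z in (-1 : ℝ)..1, ‖ψ z‖
  have hM : 0 ≤ M := integral_nonneg (by norm_num) fun _ _ => norm_nonneg _
  calc ‖green ψ x‖ ≤ 2 * M * |x - -1| :=
        norm_integral_le_of_norm_le_const (f := greenDeriv ψ) fun z hz => by
          rw [uIoc_of_le hx.1] at hz
          exact norm_greenDeriv_le hψ ⟨hz.1.le, hz.2.trans hx.2⟩
    _ ≤ 2 * M * 2 := by
        gcongr
        rw [abs_le]
        constructor <;> linarith [hx.1, hx.2]
    _ = 4 * M := by ring

lemma sqrt_L2sq_greenDeriv_le (hψ : Continuous ψ) :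
    √(L2sq (greenDeriv ψ)) ≤ 4 * √(L2sq ψ) :=
  calc √(L2sq (greenDeriv ψ)) ≤ √2 * (2 * ∫ z in (-1 : ℝ)..1, ‖ψ z‖) :=
        sqrt_L2sq_le_of_norm_le fun _ hx => norm_greenDeriv_le hψ hx
    _ ≤ √2 * (2 * (√2 * √(L2sq ψ))) := by grw [integral_norm_le_sqrt_two_mul hψ]
    _ = 4 * √(L2sq ψ) := by
        linear_combination (2 * √(L2sq ψ)) * Real.mul_self_sqrt (zero_le_two (α := ℝ))

lemma sqrt_L2sq_green_le (hψ : Continuous ψ) :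
    √(L2sq (green ψ)) ≤ 8 * √(L2sq ψ) :=
  calc √(L2sq (green ψ)) ≤ √2 * (4 * ∫ z in (-1 : ℝ)..1, ‖ψ z‖) :=
        sqrt_L2sq_le_of_norm_le fun _ hx => norm_green_le hψ hx
    _ ≤ √2 * (4 * (√2 * √(L2sq ψ))) := by grw [integral_norm_le_sqrt_two_mul hψ]
    _ = 8 * √(L2sq ψ) := by
        linear_combination (4 * √(L2sq ψ)) * Real.mul_self_sqrt (zero_le_two (α := ℝ))

end Green

section Identities

variable {ψ ψ' ψ'' : ℝ → ℂ}

lemma L2inner_green (hψ : Continuous ψ) : L2inner ψ (green ψ) = L2sq (greenDeriv ψ) := by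
  have h := L2inner_deriv_left (hasDerivAt_greenDeriv hψ) (hasDerivAt_green hψ) hψ.neg
    (continuous_greenDeriv hψ)
  simp only [green_one hψ, green_neg_one, map_zero, mul_zero, sub_zero, zero_sub,
    L2inner_self] at h
  simpa only [L2inner, neg_mul, intervalIntegral.integral_neg, neg_inj] using h

lemma L2inner_second_deriv_green (hψ : ∀ y, HasDerivAt ψ (ψ' y) y)
    (hψ' : ∀ y, HasDerivAt ψ' (ψ'' y) y) (hψ'' : Continuous ψ'') (hl : ψ (-1) = 0)
    (hr : ψ 1 = 0) : L2inner ψ'' (green ψ) = -L2sq ψ := by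
  have hψc : Continuous ψ := continuous_iff_continuousAt.2 fun y => (hψ y).continuousAt
  have hψ'c : Continuous ψ' := continuous_iff_continuousAt.2 fun y => (hψ' y).continuousAt
  have h₁ := L2inner_deriv_left hψ' (hasDerivAt_green hψc) hψ'' (continuous_greenDeriv hψc)
  have h₂ := L2inner_deriv_left hψ (hasDerivAt_greenDeriv hψc) hψ'c hψc.neg
  simp only [green_one hψc, green_neg_one, hr, hl, map_zero, mul_zero, zero_mul, sub_zero,
    zero_sub] at h₁ h₂
  rw [h₁, h₂, ← L2inner_self]
  simp only [L2inner, map_neg, mul_neg, intervalIntegral.integral_neg, neg_neg]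

lemma L2inner_green_of_ode {w : ℝ → ℂ} (k : ℝ) (hψ : ∀ y, HasDerivAt ψ (ψ' y) y)
    (hψ' : ∀ y, HasDerivAt ψ' (ψ'' y) y) (hψ'' : Continuous ψ'') (hw : Continuous w)
    (hl : ψ (-1) = 0) (hr : ψ 1 = 0)
    (hode : ∀ y ∈ Ioo (-1 : ℝ) 1, ψ'' y - (k : ℂ) ^ 2 * ψ y = -w y) :
    L2inner w (green ψ) = ((k ^ 2 * L2sq (greenDeriv ψ) + L2sq ψ : ℝ) : ℂ) := by
  have hψc : Continuous ψ := continuous_iff_continuousAt.2 fun y => (hψ y).continuousAt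
  have hχ := continuous_green hψc
  have hw_eq : EqOn w (fun y => (k : ℂ) ^ 2 * ψ y - ψ'' y) (Icc (-1) 1) := by
    rw [← closure_Ioo (by norm_num : (-1 : ℝ) ≠ 1)]
    exact EqOn.closure (fun y hy => by linear_combination hode y hy) hw (by fun_prop)
  have hsplit : L2inner w (green ψ)
      = (k : ℂ) ^ 2 * L2inner ψ (green ψ) - L2inner ψ'' (green ψ) := by
    simp only [L2inner]
    rw [← intervalIntegral.integral_const_mul, ← intervalIntegral.integral_sub
      ((by fun_prop : Continuous _).intervalIntegrable _ _)
      ((by fun_prop : Continuous _).intervalIntegrable _ _)]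
    refine intervalIntegral.integral_congr fun y hy => ?_
    rw [uIcc_of_le (by norm_num)] at hy
    simp only [hw_eq hy]
    ring
  rw [hsplit, L2inner_green hψc, L2inner_second_deriv_green hψ hψ' hψ'' hl hr]
  push_cast
  ring

end Identities

lemma integral_exp_mul_second_deriv (c : ℂ) {g g' g'' : ℝ → ℂ}
    (hg : ∀ y, HasDerivAt g (g' y) y) (hg' : ∀ y, HasDerivAt g' (g'' y) y)
    (hg'' : Continuous g'') (hl : g (-1) = 0) (hr : g 1 = 0) (hl' : g' (-1) = 0)
    (hr' : g' 1 = 0) :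
    ∫ y in (-1 : ℝ)..1, Complex.exp (-(c * y)) * g'' y
      = c ^ 2 * ∫ y in (-1 : ℝ)..1, Complex.exp (-(c * y)) * g y := by
  have hgc : Continuous g := continuous_iff_continuousAt.2 fun y => (hg y).continuousAt
  have hg'c : Continuous g' := continuous_iff_continuousAt.2 fun y => (hg' y).continuousAt
  have hE (y : ℝ) : HasDerivAt (fun x : ℝ => Complex.exp (-(c * x)))
      (Complex.exp (-(c * y)) * -c) y := by
    simpa using (((hasDerivAt_id y).ofReal_comp).const_mul c).neg.cexp
  -- `(e^{-cy} (g' + c g))' = e^{-cy} (g'' - c² g)`, and `g' + c g` vanishes at `±1`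
  have hF := integral_eq_sub_of_hasDerivAt (a := -1) (b := 1)
    (fun y _ => (hE y).mul ((hg' y).add ((hg y).const_mul c)))
    ((by fun_prop : Continuous _).intervalIntegrable _ _)
  simp only [Pi.mul_apply, Pi.add_apply, hl, hr, hl', hr', mul_zero, add_zero, sub_zero] at hF
  rw [← intervalIntegral.integral_const_mul, ← sub_eq_zero, ← intervalIntegral.integral_sub
    ((by fun_prop : Continuous _).intervalIntegrable _ _)
    ((by fun_prop : Continuous _).intervalIntegrable _ _), ← hF]
  congr 1
  ext y
  ring

lemma ContDiff.hasDerivAt_deriv_deriv {E : Type*} [NormedAddCommGroup E] [NormedSpace ℝ E]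
    {f : ℝ → E} (hf : ContDiff ℝ 2 f) :
    (∀ y, HasDerivAt f (deriv f y) y) ∧ (∀ y, HasDerivAt (deriv f) (deriv (deriv f) y) y) ∧
      Continuous (deriv (deriv f)) := by
  have hf' : ContDiff ℝ 1 (deriv f) := hf.deriv'
  exact ⟨fun y => (hf.differentiable (by norm_num) y).hasDerivAt,
    fun y => (hf'.differentiable one_ne_zero y).hasDerivAt, hf'.continuous_deriv_one⟩

lemma contDiff_ew {w : ℝ → ℂ} (k t : ℝ) (hw : ContDiff ℝ 2 w) : ContDiff ℝ 2 (ew k t w) := by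
  have : ContDiff ℝ 2 fun y : ℝ => (y : ℂ) := Complex.ofRealCLM.contDiff
  unfold ew
  fun_prop

lemma norm_ew (k t : ℝ) (w : ℝ → ℂ) (y : ℝ) : ‖ew k t w y‖ = ‖w y‖ := by
  simp [ew, Complex.norm_exp]

lemma exp_mul_ew (k t : ℝ) (w : ℝ → ℂ) (y : ℝ) :
    Complex.exp (-(Complex.I * k * t * y)) * ew k t w y = w y := by
  rw [ew, ← mul_assoc, ← Complex.exp_add]
  ring_nf
  simp

lemma norm_exp_neg_I_mul (k t y : ℝ) : ‖Complex.exp (-(Complex.I * k * t * y))‖ = 1 := by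
  simp [Complex.norm_exp]

section Oscillation

variable {w ψ : ℝ → ℂ} (k t : ℝ)

lemma sq_mul_L2inner_green_eq (hw : ContDiff ℝ 2 w) (hwl : w (-1) = 0) (hwr : w 1 = 0)
    (hψ : Continuous ψ) :
    (Complex.I * k * t) ^ 2 * L2inner w (green ψ)
      = ∫ y in (-1 : ℝ)..1, Complex.exp (-(Complex.I * k * t * y)) *
          (deriv (deriv (ew k t w)) y * conj (green ψ y)
            + deriv (ew k t w) y * conj (greenDeriv ψ y)
            + (deriv (ew k t w) y * conj (greenDeriv ψ y) + ew k t w y * conj (-ψ y))) := by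
  set φ := ew k t w
  obtain ⟨hφ, hφ', hφ''⟩ := (contDiff_ew k t hw).hasDerivAt_deriv_deriv
  have hφc : Continuous φ := (contDiff_ew k t hw).continuous
  have hφ'c : Continuous (deriv φ) := continuous_iff_continuousAt.2 fun y => (hφ' y).continuousAt
  have hχ := continuous_green hψ
  have hχ' := continuous_greenDeriv hψ
  have hφl : φ (-1) = 0 := by simp [φ, ew, hwl]
  have hφr : φ 1 = 0 := by simp [φ, ew, hwr]
  -- `w χ̄ = e^{-ikty} g` for `g = φ χ̄`, and both `g` and `g'` vanish at `±1`
  have hg (y : ℝ) : HasDerivAt (fun x => φ x * conj (green ψ x))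
      (deriv φ y * conj (green ψ y) + φ y * conj (greenDeriv ψ y)) y :=
    (hφ y).mul (hasDerivAt_green hψ y).star
  have hg' (y : ℝ) :
      HasDerivAt (fun x => deriv φ x * conj (green ψ x) + φ x * conj (greenDeriv ψ x))
        (deriv (deriv φ) y * conj (green ψ y) + deriv φ y * conj (greenDeriv ψ y)
          + (deriv φ y * conj (greenDeriv ψ y) + φ y * conj (-ψ y))) y :=
    ((hφ' y).mul (hasDerivAt_green hψ y).star).add ((hφ y).mul (hasDerivAt_greenDeriv hψ y).star)
  have hosc := integral_exp_mul_second_deriv (Complex.I * k * t) hg hg' (by fun_prop)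
    (by simp [hφl]) (by simp [hφr]) (by simp [hφl, green_neg_one]) (by simp [hφr, green_one hψ])
  simp only [← mul_assoc, φ, exp_mul_ew] at hosc
  exact hosc.symm

lemma sq_mul_norm_L2inner_green_le (hw : ContDiff ℝ 2 w) (hwl : w (-1) = 0) (hwr : w 1 = 0)
    (hψ : Continuous ψ) :
    (k * t) ^ 2 * ‖L2inner w (green ψ)‖
      ≤ √(L2sq (deriv (deriv (ew k t w)))) * √(L2sq (green ψ))
        + 2 * (√(L2sq (deriv (ew k t w))) * √(L2sq (greenDeriv ψ))) + √(L2sq w) * √(L2sq ψ) := by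
  set φ := ew k t w
  obtain ⟨-, hφ', hφ''⟩ := (contDiff_ew k t hw).hasDerivAt_deriv_deriv
  have hφ'c : Continuous (deriv φ) := continuous_iff_continuousAt.2 fun y => (hφ' y).continuousAt
  have hχ := continuous_green hψ
  have hχ' := continuous_greenDeriv hψ
  have hwc := hw.continuous
  calc (k * t) ^ 2 * ‖L2inner w (green ψ)‖
      = ‖(Complex.I * k * t) ^ 2 * L2inner w (green ψ)‖ := by
        rw [norm_mul, norm_pow, norm_mul, norm_mul, Complex.norm_I, one_mul, Complex.norm_real,
          Complex.norm_real, Real.norm_eq_abs, Real.norm_eq_abs, ← abs_mul, sq_abs]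
    _ ≤ ∫ y in (-1 : ℝ)..1, (‖deriv (deriv φ) y‖ * ‖green ψ y‖
          + 2 * (‖deriv φ y‖ * ‖greenDeriv ψ y‖) + ‖w y‖ * ‖ψ y‖) := by
        rw [sq_mul_L2inner_green_eq k t hw hwl hwr hψ]
        refine norm_integral_le_of_norm_le (by norm_num) (ae_of_all _ fun y _ => ?_)
          ((by fun_prop : Continuous _).intervalIntegrable _ _)
        rw [norm_mul, norm_exp_neg_I_mul, one_mul]
        refine ((norm_add_le _ _).trans
          (add_le_add (norm_add_le _ _) (norm_add_le _ _))).trans_eq ?_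
        simp only [norm_mul, Complex.norm_conj, norm_neg, φ, norm_ew]
        ring
    _ = (∫ y in (-1 : ℝ)..1, ‖deriv (deriv φ) y‖ * ‖green ψ y‖)
          + 2 * (∫ y in (-1 : ℝ)..1, ‖deriv φ y‖ * ‖greenDeriv ψ y‖)
          + ∫ y in (-1 : ℝ)..1, ‖w y‖ * ‖ψ y‖ := by
        rw [intervalIntegral.integral_add ((by fun_prop : Continuous _).intervalIntegrable _ _)
            ((by fun_prop : Continuous _).intervalIntegrable _ _),
          intervalIntegral.integral_add ((by fun_prop : Continuous _).intervalIntegrable _ _)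
            ((by fun_prop : Continuous _).intervalIntegrable _ _),
          intervalIntegral.integral_const_mul]
    _ ≤ _ := by
        gcongr <;> exact integral_norm_mul_le_sqrt_L2sq (by fun_prop) (by fun_prop)

end Oscillation

lemma le_mul_inv_one_add_abs_sq {n P a b x : ℝ} (hn : 0 ≤ n) (hab : 0 ≤ a + b)
    (hlow : n ^ 2 ≤ P) (hP : P ≤ a * n) (hxP : x ^ 2 * P ≤ b * n) :
    n ≤ 2 * (a + b) * ((1 + |x|) ^ 2)⁻¹ := by
  rw [le_mul_inv_iff₀ (by positivity)]
  have hx : (1 + |x|) ^ 2 ≤ 2 * (1 + x ^ 2) := by nlinarith [sq_abs x, sq_nonneg (1 - |x|)]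
  have hn' : (1 + x ^ 2) * n ≤ a + b := by
    rcases hn.eq_or_lt with rfl | hpos
    · simpa using hab
    · refine le_of_mul_le_mul_right ?_ hpos
      nlinarith
  nlinarith [mul_le_mul_of_nonneg_right hx hn]

/-- Low-frequency inviscid damping estimate:
`‖ψ‖ ≤ C (1+|kt|)^{-2} ‖(∂_y,1)²(e^{ikyt}w)‖` for `0 < |k| ≤ 1`. -/
theorem psi_lowfreq_second :
    ∃ C > (0 : ℝ), ∀ (k t : ℝ) (ψ w : ℝ → ℂ),
      k ≠ 0 → |k| ≤ 1 → 0 ≤ t →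
      ContDiff ℝ 2 ψ → ContDiff ℝ 2 w →
      ψ (-1) = 0 → ψ 1 = 0 → w (-1) = 0 → w 1 = 0 →
      (∀ y ∈ Ioo (-1 : ℝ) 1, deriv (deriv ψ) y - (k : ℂ) ^ 2 * ψ y = -w y) →
      Real.sqrt (L2sq ψ)
        ≤ C * ((1 + |k * t|) ^ 2)⁻¹ * Real.sqrt
            (L2sq (deriv (deriv (ew k t w))) + L2sq (deriv (ew k t w)) + L2sq w) := by
  refine ⟨50, by norm_num, fun k t ψ w _ _ _ hψ hw hψl hψr hwl hwr hode => ?_⟩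
  obtain ⟨hψ', hψ'', hψ''c⟩ := hψ.hasDerivAt_deriv_deriv
  have hψc := hψ.continuous
  have hχ := sqrt_L2sq_green_le hψc
  have hχ' := sqrt_L2sq_greenDeriv_le hψc
  have hA := L2sq_nonneg (deriv (deriv (ew k t w)))
  have hB := L2sq_nonneg (deriv (ew k t w))
  have hW := L2sq_nonneg w
  set n := √(L2sq ψ)
  set S := √(L2sq (deriv (deriv (ew k t w))) + L2sq (deriv (ew k t w)) + L2sq w)
  have hAS : √(L2sq (deriv (deriv (ew k t w)))) ≤ S := Real.sqrt_le_sqrt (by linarith)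
  have hBS : √(L2sq (deriv (ew k t w))) ≤ S := Real.sqrt_le_sqrt (by linarith)
  have hWS : √(L2sq w) ≤ S := Real.sqrt_le_sqrt (by linarith)
  have hlow : n ^ 2 ≤ ‖L2inner w (green ψ)‖ := by
    rw [L2inner_green_of_ode k hψ' hψ'' hψ''c hw.continuous hψl hψr hode, Complex.norm_real,
      Real.norm_eq_abs, Real.sq_sqrt (L2sq_nonneg ψ)]
    exact (le_add_of_nonneg_left (by have := L2sq_nonneg (greenDeriv ψ); positivity)).trans
      (le_abs_self _)
  have hsmall : ‖L2inner w (green ψ)‖ ≤ 8 * S * n :=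
    calc ‖L2inner w (green ψ)‖ ≤ √(L2sq w) * √(L2sq (green ψ)) :=
          norm_L2inner_le hw.continuous (continuous_green hψc)
      _ ≤ S * (8 * n) := by gcongr
      _ = 8 * S * n := by ring
  have hosc : (k * t) ^ 2 * ‖L2inner w (green ψ)‖ ≤ 17 * S * n :=
    calc (k * t) ^ 2 * ‖L2inner w (green ψ)‖ ≤ _ := sq_mul_norm_L2inner_green_le k t hw hwl hwr hψc
      _ ≤ S * (8 * n) + 2 * (S * (4 * n)) + S * n := by gcongr
      _ = 17 * S * n := by ring
  exact (le_mul_inv_one_add_abs_sq (Real.sqrt_nonneg _) (by positivity) hlow hsmall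
    hosc).trans_eq (by ring)
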